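/- If G is a connected graph and C is a minimum edge cut of G (so |C| equals the edge-connectivity \kappa'(G)), then \gamma_g(G) \le \gamma_g(G \ C) + 2\kappa'(G). -/
import Mathlib


open Finset
open scoped Classical

variable {V : Type*}

/-- The closed neighborhood `N[v]` of a vertex, as a finset. -/
noncomputable def closedNbhd [Fintype V] (G : SimpleGraph V) (v : V) : Finset V :=
  Finset.univ.filter (fun u => u = v ∨ G.Adj v u)

/-- The legal moves in the domination game when `D` is the set of dominated vertices:
vertices whose closed neighborhood is not already dominated. -/
noncomputable def legalMoves [Fintype V] (G : SimpleGraph V) (D : Finset V) : Finset V :=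
  Finset.univ.filter (fun v => ¬ closedNbhd G v ⊆ D)

lemma legalMoves_nonempty [Fintype V] (G : SimpleGraph V) {D : Finset V}
    (h : D ≠ Finset.univ) : (legalMoves G D).Nonempty := by
  obtain ⟨v, hv⟩ : ∃ v, v ∉ D := by
    by_contra hc
    push_neg at hc
    exact h (Finset.eq_univ_iff_forall.2 hc)
  refine ⟨v, ?_⟩
  simp only [legalMoves, Finset.mem_filter, Finset.mem_univ, true_and]
  intro hsub
  exact hv (hsub (by simp [closedNbhd]))

lemma card_lt_of_legal [Fintype V] (G : SimpleGraph V) {D : Finset V} {v : V}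
    (hv : v ∈ legalMoves G D) :
    (Finset.univ \ (D ∪ closedNbhd G v)).card < (Finset.univ \ D).card := by
  simp only [legalMoves, Finset.mem_filter, Finset.mem_univ, true_and] at hv
  obtain ⟨u, hu1, hu2⟩ := Finset.not_subset.1 hv
  apply Finset.card_lt_card
  constructor
  · exact Finset.sdiff_subset_sdiff (le_refl _) Finset.subset_union_left
  · intro hsub
    have := hsub (Finset.mem_sdiff.2 ⟨Finset.mem_univ u, hu2⟩)
    simp only [Finset.mem_sdiff, Finset.mem_union] at this
    exact this.2 (Or.inr hu1)

/-- Optimal number of moves in the domination game on the partially dominated graph `G|D`;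
`turn = true` means Dominator (the minimizer) moves next, `turn = false` means Staller
(the maximizer) moves next.  Every move must dominate a not-yet-dominated vertex and the
game ends when all vertices are dominated. -/
noncomputable def gameVal [Fintype V] (G : SimpleGraph V) : Bool → Finset V → ℕ
  | turn, D =>
    if h : D = Finset.univ then 0
    else
      have hne : (legalMoves G D).attach.Nonempty :=
        (Finset.attach_nonempty_iff).2 (legalMoves_nonempty G h)
      if turn then
        1 + (legalMoves G D).attach.inf' hne
          (fun v => gameVal G false (D ∪ closedNbhd G v.1))
      else
        1 + (legalMoves G D).attach.sup' hne
          (fun v => gameVal G true (D ∪ closedNbhd G v.1))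
  termination_by turn D => (Finset.univ \ D).card
  decreasing_by all_goals exact card_lt_of_legal G v.2

/-- The Dominator-start game domination number `γ_g(G|S)` of the partially dominated graph. -/
noncomputable def gammaG [Fintype V] (G : SimpleGraph V) (S : Finset V) : ℕ :=
  gameVal G true S

/-- The Staller-start game domination number `γ_g'(G|S)` of the partially dominated graph. -/
noncomputable def gammaG' [Fintype V] (G : SimpleGraph V) (S : Finset V) : ℕ :=
  gameVal G false S

/-- Optimal number of (non-pass) moves in the Staller `p`-pass domination game on `G|D`:
the Dominator-start game in which Staller may additionally pass at most `p` times. -/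
noncomputable def passVal [Fintype V] (G : SimpleGraph V) : Bool → ℕ → Finset V → ℕ
  | turn, p, D =>
    if h : D = Finset.univ then 0
    else
      have hne : (legalMoves G D).attach.Nonempty :=
        (Finset.attach_nonempty_iff).2 (legalMoves_nonempty G h)
      if turn then
        1 + (legalMoves G D).attach.inf' hne
          (fun v => passVal G false p (D ∪ closedNbhd G v.1))
      else
        match p with
        | 0 =>
          1 + (legalMoves G D).attach.sup' hne
            (fun v => passVal G true 0 (D ∪ closedNbhd G v.1))
        | q + 1 =>
          max
            (1 + (legalMoves G D).attach.sup' hne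
              (fun v => passVal G true (q + 1) (D ∪ closedNbhd G v.1)))
            (passVal G true q D)
  termination_by turn p D => ((Finset.univ \ D).card, p)
  decreasing_by
  · exact Prod.Lex.left _ _ (card_lt_of_legal G v.2)
  · exact Prod.Lex.left _ _ (card_lt_of_legal G v.2)
  · exact Prod.Lex.left _ _ (card_lt_of_legal G v.2)
  · exact Prod.Lex.right _ (Nat.lt_succ_self q)

/-- `γ_g^{St,p}(G)`: the Staller `p`-pass game domination number. -/
noncomputable def gammaPass [Fintype V] (G : SimpleGraph V) (p : ℕ) : ℕ :=
  passVal G true p ∅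

/-- Value (in `ℤ`) of the Dominator `1`-pass game on `G|D` in which the payoff is the
number of moves made minus the number of passes used by Dominator; Dominator minimizes,
Staller maximizes.  `turn = true` means it is Dominator's move, `pass = true` means the
pass is still available to Dominator. -/
noncomputable def domPassVal [Fintype V] (G : SimpleGraph V) : Bool → Bool → Finset V → ℤ
  | turn, pass, D =>
    if h : D = Finset.univ then 0
    else
      have hne : (legalMoves G D).attach.Nonempty :=
        (Finset.attach_nonempty_iff).2 (legalMoves_nonempty G h)
      if turn then
        match pass with
        | false =>
          1 + (legalMoves G D).attach.inf' hne
            (fun v => domPassVal G false false (D ∪ closedNbhd G v.1))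
        | true =>
          min
            (1 + (legalMoves G D).attach.inf' hne
              (fun v => domPassVal G false true (D ∪ closedNbhd G v.1)))
            (domPassVal G false false D - 1)
      else
        1 + (legalMoves G D).attach.sup' hne
          (fun v => domPassVal G true pass (D ∪ closedNbhd G v.1))
  termination_by turn pass D => ((Finset.univ \ D).card, pass.toNat)
  decreasing_by
  · exact Prod.Lex.left _ _ (card_lt_of_legal G v.2)
  · exact Prod.Lex.left _ _ (card_lt_of_legal G v.2)
  · exact Prod.Lex.right _ (by norm_num)
  · exact Prod.Lex.left _ _ (card_lt_of_legal G v.2)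

/-- A graph is a double-Staller graph if, in the Dominator `1`-pass game, Staller has a
strategy forcing at least `γ_g(G) + p` moves, where `p ∈ {0,1}` is the number of passes
used by Dominator.  Equivalently, the optimal value of "moves minus Dominator passes" in
that game is at least `γ_g(G)`. -/
def IsDoubleStaller [Fintype V] (G : SimpleGraph V) : Prop :=
  (gammaG G ∅ : ℤ) ≤ domPassVal G true true ∅

/-- An edge cut of `G`: a set of edges whose removal disconnects `G`. -/
def IsEdgeCut (G : SimpleGraph V) (C : Set (Sym2 V)) : Prop :=
  C ⊆ G.edgeSet ∧ ¬ (G.deleteEdges C).Connected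

/-- A minimal edge cut: no proper subset is an edge cut. -/
def IsMinimalEdgeCut (G : SimpleGraph V) (C : Set (Sym2 V)) : Prop :=
  IsEdgeCut G C ∧ ∀ C' ⊂ C, ¬ IsEdgeCut G C'

/-- A minimum edge cut: an edge cut of the smallest possible cardinality (this
cardinality is the edge-connectivity `κ'(G)`). -/
def IsMinimumEdgeCut (G : SimpleGraph V) (C : Set (Sym2 V)) : Prop :=
  IsEdgeCut G C ∧ ∀ C', IsEdgeCut G C' → C.ncard ≤ C'.ncard

/-- A graph is traceable if it contains a Hamiltonian path. -/
def Traceable (G : SimpleGraph V) : Prop :=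
  ∃ (a b : V) (p : G.Walk a b), p.IsHamiltonian
/-- The disjoint union of two graphs. -/
def sumGraph {V₁ V₂ : Type*} (G₁ : SimpleGraph V₁) (G₂ : SimpleGraph V₂) :
    SimpleGraph (V₁ ⊕ V₂) :=
  SimpleGraph.fromRel (fun a b =>
    match a, b with
    | Sum.inl u, Sum.inl w => G₁.Adj u w
    | Sum.inr u, Sum.inr w => G₂.Adj u w
    | _, _ => False)

/-- The graph `H_{x,3}`: two disjoint copies of `H` (the first copy on `Sum.inl ∘ Sum.inl`,
the second on `Sum.inl ∘ Sum.inr`) joined by a path of length 3 from `x` to its copy `x'`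
through the two internal vertices `y = Sum.inr 0` (adjacent to `x`) and
`y' = Sum.inr 1` (adjacent to `x'`). -/
def Hx3 (H : SimpleGraph V) (x : V) : SimpleGraph ((V ⊕ V) ⊕ Fin 2) :=
  SimpleGraph.fromRel (fun a b =>
    match a, b with
    | Sum.inl (Sum.inl u), Sum.inl (Sum.inl w) => H.Adj u w
    | Sum.inl (Sum.inr u), Sum.inl (Sum.inr w) => H.Adj u w
    | Sum.inl (Sum.inl u), Sum.inr i => u = x ∧ i = 0
    | Sum.inl (Sum.inr u), Sum.inr i => u = x ∧ i = 1
    | Sum.inr i, Sum.inr j => i ≠ j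
    | _, _ => False)

/-- The tree `T_n`: a star `K_{1,n}` with center `Sum.inl ()`, support vertices
`Sum.inr (Sum.inl i)`, and four leaves `Sum.inr (Sum.inr (i, l))` attached to each
support vertex. -/
def Tn (n : ℕ) : SimpleGraph (Unit ⊕ (Fin n ⊕ Fin n × Fin 4)) :=
  SimpleGraph.fromRel (fun a b =>
    match a, b with
    | Sum.inl _, Sum.inr (Sum.inl _) => True
    | Sum.inr (Sum.inl i), Sum.inr (Sum.inr jl) => i = jl.1
    | _, _ => False)

/-- The graph `K_k(H)`: the disjoint union of the complete graph `K_k` (on `Fin k`,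
embedded via `Sum.inl`) and the graph `H` (embedded via `Sum.inr`), together with the
two extra edges `au` and `bv`. -/
def KkH {W : Type*} (k : ℕ) (H : SimpleGraph W) (u v : Fin k) (a b : W) :
    SimpleGraph (Fin k ⊕ W) :=
  SimpleGraph.fromRel (fun s t =>
    match s, t with
    | Sum.inl i, Sum.inl j => i ≠ j
    | Sum.inr w₁, Sum.inr w₂ => H.Adj w₁ w₂
    | Sum.inl i, Sum.inr w => (i = u ∧ w = a) ∨ (i = v ∧ w = b)
    | _, _ => False)

section Aux
variable [Fintype V]

lemma mem_closedNbhd {G : SimpleGraph V} {v u : V} :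
    u ∈ closedNbhd G v ↔ (u = v ∨ G.Adj v u) := by simp [closedNbhd]

lemma self_mem_closedNbhd (G : SimpleGraph V) (v : V) : v ∈ closedNbhd G v :=
  mem_closedNbhd.2 (Or.inl rfl)

lemma mem_legalMoves {G : SimpleGraph V} {v : V} {D : Finset V} :
    v ∈ legalMoves G D ↔ ¬ closedNbhd G v ⊆ D := by simp [legalMoves]

lemma gameVal_univ (G : SimpleGraph V) (t : Bool) : gameVal G t univ = 0 := by
  rw [gameVal]; simp

lemma passVal_univ (G : SimpleGraph V) (t : Bool) (p : ℕ) : passVal G t p univ = 0 := by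
  rw [passVal]; simp

lemma ne_univ_of_subset {D' D : Finset V} (h : D' ⊆ D) (hD : D ≠ univ) : D' ≠ univ := by
  intro h'; exact hD (le_antisymm (subset_univ D) (h' ▸ h))

lemma gameVal_true_eq {G : SimpleGraph V} {D : Finset V} (h : D ≠ univ) :
    gameVal G true D = 1 + (legalMoves G D).attach.inf'
      ((Finset.attach_nonempty_iff).2 (legalMoves_nonempty G h))
      (fun v => gameVal G false (D ∪ closedNbhd G v.1)) := by
  rw [gameVal]; simp [h]

lemma gameVal_false_eq {G : SimpleGraph V} {D : Finset V} (h : D ≠ univ) :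
    gameVal G false D = 1 + (legalMoves G D).attach.sup'
      ((Finset.attach_nonempty_iff).2 (legalMoves_nonempty G h))
      (fun v => gameVal G true (D ∪ closedNbhd G v.1)) := by
  rw [gameVal]; simp [h]

lemma passVal_true_eq {G : SimpleGraph V} {D : Finset V} (p : ℕ) (h : D ≠ univ) :
    passVal G true p D = 1 + (legalMoves G D).attach.inf'
      ((Finset.attach_nonempty_iff).2 (legalMoves_nonempty G h))
      (fun v => passVal G false p (D ∪ closedNbhd G v.1)) := by
  rw [passVal]; simp [h]

lemma passVal_false_zero_eq {G : SimpleGraph V} {D : Finset V} (h : D ≠ univ) :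
    passVal G false 0 D = 1 + (legalMoves G D).attach.sup'
      ((Finset.attach_nonempty_iff).2 (legalMoves_nonempty G h))
      (fun v => passVal G true 0 (D ∪ closedNbhd G v.1)) := by
  rw [passVal]; simp [h]

lemma passVal_false_succ_eq {G : SimpleGraph V} {D : Finset V} (q : ℕ) (h : D ≠ univ) :
    passVal G false (q + 1) D = max
      (1 + (legalMoves G D).attach.sup'
        ((Finset.attach_nonempty_iff).2 (legalMoves_nonempty G h))
        (fun v => passVal G true (q + 1) (D ∪ closedNbhd G v.1)))
      (passVal G true q D) := by
  rw [passVal]; simp [h]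

/-- Dominator can play any legal move. -/
lemma gameVal_true_le {G : SimpleGraph V} {D : Finset V} {w : V} (h : D ≠ univ)
    (hw : w ∈ legalMoves G D) :
    gameVal G true D ≤ 1 + gameVal G false (D ∪ closedNbhd G w) := by
  rw [gameVal_true_eq h]
  exact Nat.add_le_add_left
    (Finset.inf'_le _ (Finset.mem_attach _ (⟨w, hw⟩ : {x // x ∈ legalMoves G D}))) 1

lemma gameVal_false_ge {G : SimpleGraph V} {D : Finset V} {w : V} (h : D ≠ univ)
    (hw : w ∈ legalMoves G D) :
    1 + gameVal G true (D ∪ closedNbhd G w) ≤ gameVal G false D := by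
  rw [gameVal_false_eq h]
  exact Nat.add_le_add_left
    (Finset.le_sup' (fun v : {x // x ∈ legalMoves G D} => gameVal G true (D ∪ closedNbhd G v.1))
      (Finset.mem_attach _ ⟨w, hw⟩)) 1

lemma gameVal_true_attained {G : SimpleGraph V} {D : Finset V} (h : D ≠ univ) :
    ∃ v ∈ legalMoves G D,
      gameVal G true D = 1 + gameVal G false (D ∪ closedNbhd G v) := by
  rw [gameVal_true_eq h]
  obtain ⟨v, -, hv⟩ := Finset.exists_mem_eq_inf'
    ((Finset.attach_nonempty_iff).2 (legalMoves_nonempty G h))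
    (fun v : {x // x ∈ legalMoves G D} => gameVal G false (D ∪ closedNbhd G v.1))
  exact ⟨v.1, v.2, by rw [hv]⟩

lemma gameVal_false_attained {G : SimpleGraph V} {D : Finset V} (h : D ≠ univ) :
    ∃ v ∈ legalMoves G D,
      gameVal G false D = 1 + gameVal G true (D ∪ closedNbhd G v) := by
  rw [gameVal_false_eq h]
  obtain ⟨v, -, hv⟩ := Finset.exists_mem_eq_sup'
    ((Finset.attach_nonempty_iff).2 (legalMoves_nonempty G h))
    (fun v : {x // x ∈ legalMoves G D} => gameVal G true (D ∪ closedNbhd G v.1))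
  exact ⟨v.1, v.2, by rw [hv]⟩

lemma passVal_true_attained {G : SimpleGraph V} {D : Finset V} (p : ℕ) (h : D ≠ univ) :
    ∃ v ∈ legalMoves G D,
      passVal G true p D = 1 + passVal G false p (D ∪ closedNbhd G v) := by
  rw [passVal_true_eq p h]
  obtain ⟨v, -, hv⟩ := Finset.exists_mem_eq_inf'
    ((Finset.attach_nonempty_iff).2 (legalMoves_nonempty G h))
    (fun v : {x // x ∈ legalMoves G D} => passVal G false p (D ∪ closedNbhd G v.1))
  exact ⟨v.1, v.2, by rw [hv]⟩

lemma passVal_true_le {G : SimpleGraph V} {D : Finset V} {w : V} (p : ℕ) (h : D ≠ univ)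
    (hw : w ∈ legalMoves G D) :
    passVal G true p D ≤ 1 + passVal G false p (D ∪ closedNbhd G w) := by
  rw [passVal_true_eq p h]
  exact Nat.add_le_add_left
    (Finset.inf'_le _ (Finset.mem_attach _ (⟨w, hw⟩ : {x // x ∈ legalMoves G D}))) 1

lemma passVal_false_ge {G : SimpleGraph V} {D : Finset V} {w : V} (p : ℕ) (h : D ≠ univ)
    (hw : w ∈ legalMoves G D) :
    1 + passVal G true p (D ∪ closedNbhd G w) ≤ passVal G false p D := by
  cases p with
  | zero =>
    rw [passVal_false_zero_eq h]
    exact Nat.add_le_add_left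
      (Finset.le_sup' (fun v : {x // x ∈ legalMoves G D} => passVal G true 0 (D ∪ closedNbhd G v.1))
        (Finset.mem_attach _ ⟨w, hw⟩)) 1
  | succ q =>
    rw [passVal_false_succ_eq q h]
    exact le_max_of_le_left (Nat.add_le_add_left
      (Finset.le_sup'
        (fun v : {x // x ∈ legalMoves G D} => passVal G true (q + 1) (D ∪ closedNbhd G v.1))
        (Finset.mem_attach _ ⟨w, hw⟩)) 1)

lemma passVal_false_succ_ge_pass {G : SimpleGraph V} {D : Finset V} (q : ℕ) (h : D ≠ univ) :
    passVal G true q D ≤ passVal G false (q + 1) D := by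
  rw [passVal_false_succ_eq q h]; exact le_max_right _ _

/-- Continuation principle. -/
lemma gameVal_mono (G : SimpleGraph V) :
    ∀ n (t : Bool) (D' D : Finset V), (univ \ D').card ≤ n → D' ⊆ D →
      gameVal G t D ≤ gameVal G t D' := by
  intro n
  induction n using Nat.strong_induction_on with
  | _ n IH =>
  intro t D' D hn hsub
  by_cases hD : D = univ
  · subst hD; rw [gameVal_univ]; exact Nat.zero_le _
  have hD' : D' ≠ univ := ne_univ_of_subset hsub hD
  cases t with
  | true =>
    obtain ⟨v, hv, hval⟩ := gameVal_true_attained (G := G) hD'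
    rw [hval]
    have hmeas : (univ \ (D' ∪ closedNbhd G v)).card < n :=
      lt_of_lt_of_le (card_lt_of_legal G hv) hn
    by_cases hleg : v ∈ legalMoves G D
    · calc gameVal G true D ≤ 1 + gameVal G false (D ∪ closedNbhd G v) :=
            gameVal_true_le hD hleg
        _ ≤ 1 + gameVal G false (D' ∪ closedNbhd G v) :=
            Nat.add_le_add_left (IH _ hmeas false _ _ le_rfl
              (Finset.union_subset_union hsub (Finset.Subset.refl _))) 1
    · have hvd : closedNbhd G v ⊆ D := by
        by_contra h; exact hleg (mem_legalMoves.2 h)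
      obtain ⟨w, hw⟩ := legalMoves_nonempty G hD
      calc gameVal G true D ≤ 1 + gameVal G false (D ∪ closedNbhd G w) :=
            gameVal_true_le hD hw
        _ ≤ 1 + gameVal G false (D' ∪ closedNbhd G v) := by
            refine Nat.add_le_add_left (IH _ hmeas false _ _ le_rfl ?_) 1
            exact subset_trans (Finset.union_subset hsub hvd) Finset.subset_union_left
  | false =>
    obtain ⟨w, hw, hval⟩ := gameVal_false_attained (G := G) hD
    rw [hval]
    have hw' : w ∈ legalMoves G D' := by
      rw [mem_legalMoves] at hw ⊢
      exact fun hsub' => hw (hsub'.trans hsub)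
    have hmeas : (univ \ (D' ∪ closedNbhd G w)).card < n :=
      lt_of_lt_of_le (card_lt_of_legal G hw') hn
    calc 1 + gameVal G true (D ∪ closedNbhd G w)
        ≤ 1 + gameVal G true (D' ∪ closedNbhd G w) :=
          Nat.add_le_add_left (IH _ hmeas true _ _ le_rfl
            (Finset.union_subset_union hsub (Finset.Subset.refl _))) 1
      _ ≤ gameVal G false D' := gameVal_false_ge hD' hw'

lemma gameVal_mono' (G : SimpleGraph V) {t : Bool} {D' D : Finset V} (h : D' ⊆ D) :
    gameVal G t D ≤ gameVal G t D' :=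
  gameVal_mono G _ t D' D le_rfl h

/-- `γ_g'(G|D) ≤ γ_g(G|D) + 1`. -/
lemma gameVal_false_le_true (G : SimpleGraph V) (D : Finset V) :
    gameVal G false D ≤ gameVal G true D + 1 := by
  by_cases hD : D = univ
  · subst hD; rw [gameVal_univ]; exact Nat.zero_le _
  obtain ⟨w, hw, hval⟩ := gameVal_false_attained (G := G) hD
  rw [hval]
  have := gameVal_mono' G (t := true) (Finset.subset_union_left (s₁ := D) (s₂ := closedNbhd G w))
  omega

/-- `γ_g(G|D) ≤ γ_g'(G|D) + 1`. -/
lemma gameVal_true_le_false (G : SimpleGraph V) (D : Finset V) :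
    gameVal G true D ≤ gameVal G false D + 1 := by
  by_cases hD : D = univ
  · subst hD; rw [gameVal_univ]; exact Nat.zero_le _
  obtain ⟨w, hw, hval⟩ := gameVal_false_attained (G := G) hD
  have h1 : gameVal G true D ≤ 1 + gameVal G false (D ∪ closedNbhd G w) :=
    gameVal_true_le hD hw
  have h2 := gameVal_false_le_true G (D ∪ closedNbhd G w)
  omega

/-- Each Staller pass costs at most one extra move. -/
lemma passVal_le_gameVal (G : SimpleGraph V) :
    ∀ n (t : Bool) (p : ℕ) (D : Finset V), (univ \ D).card + p ≤ n →
      passVal G t p D ≤ gameVal G t D + p := by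
  intro n
  induction n using Nat.strong_induction_on with
  | _ n IH =>
  intro t p D hn
  by_cases hD : D = univ
  · subst hD; rw [passVal_univ]; exact Nat.zero_le _
  cases t with
  | true =>
    obtain ⟨v, hv, hval⟩ := gameVal_true_attained (G := G) hD
    rw [hval]
    have hmeas : (univ \ (D ∪ closedNbhd G v)).card + p < n :=
      lt_of_lt_of_le (by have := card_lt_of_legal G hv; omega) hn
    have h1 : passVal G true p D ≤ 1 + passVal G false p (D ∪ closedNbhd G v) :=
      passVal_true_le p hD hv
    have h2 := IH _ hmeas false p (D ∪ closedNbhd G v) le_rfl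
    omega
  | false =>
    cases p with
    | zero =>
      rw [passVal_false_zero_eq hD]
      obtain ⟨w, -, hweq⟩ := Finset.exists_mem_eq_sup'
        ((Finset.attach_nonempty_iff).2 (legalMoves_nonempty G hD))
        (fun v : {x // x ∈ legalMoves G D} => passVal G true 0 (D ∪ closedNbhd G v.1))
      rw [hweq]
      have hmeas : (univ \ (D ∪ closedNbhd G w.1)).card + 0 < n :=
        lt_of_lt_of_le (by have := card_lt_of_legal G w.2; omega) hn
      have h1 := IH _ hmeas true 0 (D ∪ closedNbhd G w.1) le_rfl
      have h2 : 1 + gameVal G true (D ∪ closedNbhd G w.1) ≤ gameVal G false D :=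
        gameVal_false_ge hD w.2
      omega
    | succ q =>
      rw [passVal_false_succ_eq q hD]
      apply max_le
      · obtain ⟨w, -, hweq⟩ := Finset.exists_mem_eq_sup'
          ((Finset.attach_nonempty_iff).2 (legalMoves_nonempty G hD))
          (fun v : {x // x ∈ legalMoves G D} => passVal G true (q + 1) (D ∪ closedNbhd G v.1))
        rw [hweq]
        have hmeas : (univ \ (D ∪ closedNbhd G w.1)).card + (q + 1) < n :=
          lt_of_lt_of_le (by have := card_lt_of_legal G w.2; omega) hn
        have h1 := IH _ hmeas true (q + 1) (D ∪ closedNbhd G w.1) le_rfl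
        have h2 : 1 + gameVal G true (D ∪ closedNbhd G w.1) ≤ gameVal G false D :=
          gameVal_false_ge hD w.2
        omega
      · have hmeas : (univ \ D).card + q < n := by omega
        have h1 := IH _ hmeas true q D le_rfl
        have h2 := gameVal_true_le_false G D
        omega

end Aux

section Main
variable [Fintype V]

lemma budget_mono (CF : Finset (Sym2 V)) {D E : Finset V} (hDE : D ⊆ E) :
    (CF.filter (fun e => ∃ x ∈ e, x ∉ E)).card ≤
      (CF.filter (fun e => ∃ x ∈ e, x ∉ D)).card := by
  apply Finset.card_le_card
  intro e he
  simp only [Finset.mem_filter] at he ⊢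
  obtain ⟨h1, x, hx1, hx2⟩ := he
  exact ⟨h1, x, hx1, fun hxD => hx2 (hDE hxD)⟩

lemma imitation (G H : SimpleGraph V) (CF : Finset (Sym2 V))
    (hsub : ∀ v, closedNbhd H v ⊆ closedNbhd G v)
    (hcut : ∀ v u, u ∈ closedNbhd G v → u ∉ closedNbhd H v → s(v, u) ∈ CF) :
    ∀ n (t : Bool) (p : ℕ) (D' D : Finset V), (univ \ D').card + p ≤ n → D' ⊆ D →
      (CF.filter (fun e => ∃ x ∈ e, x ∉ D)).card ≤ p →
      gameVal G t D ≤ passVal H t p D' + p := by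
  intro n
  induction n using Nat.strong_induction_on with
  | _ n IH =>
  intro t p D' D hn hDD hbud
  by_cases hD : D = univ
  · subst hD; rw [gameVal_univ]; exact Nat.zero_le _
  have hD' : D' ≠ univ := ne_univ_of_subset hDD hD
  cases t with
  | true =>
    obtain ⟨v, hv, hval⟩ := passVal_true_attained (G := H) p hD'
    rw [hval]
    have hmeas : (univ \ (D' ∪ closedNbhd H v)).card + p < n :=
      lt_of_lt_of_le (by have := card_lt_of_legal H hv; omega) hn
    by_cases hleg : v ∈ legalMoves G D
    · have h1 : gameVal G true D ≤ 1 + gameVal G false (D ∪ closedNbhd G v) :=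
        gameVal_true_le hD hleg
      have hsub2 : D' ∪ closedNbhd H v ⊆ D ∪ closedNbhd G v :=
        Finset.union_subset_union hDD (hsub v)
      have h2 := IH _ hmeas false p (D' ∪ closedNbhd H v) (D ∪ closedNbhd G v) le_rfl hsub2
        (le_trans (budget_mono CF Finset.subset_union_left) hbud)
      omega
    · have hvd : closedNbhd G v ⊆ D := by
        by_contra h; exact hleg (mem_legalMoves.2 h)
      have h1 := gameVal_true_le_false G D
      have hsub2 : D' ∪ closedNbhd H v ⊆ D :=
        Finset.union_subset hDD ((hsub v).trans hvd)
      have h2 := IH _ hmeas false p (D' ∪ closedNbhd H v) D le_rfl hsub2 hbud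
      omega
  | false =>
    obtain ⟨w, hw, hval⟩ := gameVal_false_attained (G := G) hD
    rw [hval]
    by_cases hleg : w ∈ legalMoves H D'
    · have hmeas : (univ \ (D' ∪ closedNbhd H w)).card + p < n :=
        lt_of_lt_of_le (by have := card_lt_of_legal H hleg; omega) hn
      have hsub2 : D' ∪ closedNbhd H w ⊆ D ∪ closedNbhd G w :=
        Finset.union_subset_union hDD (hsub w)
      have h2 := IH _ hmeas true p (D' ∪ closedNbhd H w) (D ∪ closedNbhd G w) le_rfl hsub2
        (le_trans (budget_mono CF Finset.subset_union_left) hbud)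
      have h3 := passVal_false_ge p hD' hleg
      omega
    · -- pass event: Staller's real move is illegal in the imagined game
      have hHd : closedNbhd H w ⊆ D' := by
        by_contra h; exact hleg (mem_legalMoves.2 h)
      obtain ⟨u, hu1, hu2⟩ := Finset.not_subset.1 (mem_legalMoves.1 hw)
      have huH : u ∉ closedNbhd H w := fun h => hu2 (hDD (hHd h))
      have hedge : s(w, u) ∈ CF := hcut w u hu1 huH
      have hlive : s(w, u) ∈ CF.filter (fun e => ∃ x ∈ e, x ∉ D) := by
        simp only [Finset.mem_filter]
        exact ⟨hedge, u, by simp, hu2⟩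
      have hp1 : 1 ≤ p := le_trans (Finset.card_pos.2 ⟨_, hlive⟩) hbud
      obtain ⟨q, rfl⟩ : ∃ q, p = q + 1 := ⟨p - 1, by omega⟩
      have hsubset : CF.filter (fun e => ∃ x ∈ e, x ∉ D ∪ closedNbhd G w) ⊆
          (CF.filter (fun e => ∃ x ∈ e, x ∉ D)).erase s(w, u) := by
        intro e he
        simp only [Finset.mem_filter] at he
        obtain ⟨h1, x, hx1, hx2⟩ := he
        refine Finset.mem_erase.2 ⟨?_, ?_⟩
        · rintro rfl
          rw [Sym2.mem_iff] at hx1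
          rcases hx1 with h | h
          · subst h
            exact hx2 (Finset.mem_union.2 (Or.inr (self_mem_closedNbhd G x)))
          · subst h
            exact hx2 (Finset.mem_union.2 (Or.inr hu1))
        · simp only [Finset.mem_filter]
          exact ⟨h1, x, hx1, fun h => hx2 (Finset.mem_union.2 (Or.inl h))⟩
      have hbud2 : (CF.filter (fun e => ∃ x ∈ e, x ∉ D ∪ closedNbhd G w)).card ≤ q := by
        have hc1 := Finset.card_le_card hsubset
        have hc2 := Finset.card_erase_of_mem hlive
        omega
      have hmeas : (univ \ D').card + q < n := by omega
      have h2 := IH _ hmeas true q D' (D ∪ closedNbhd G w) le_rfl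
        (hDD.trans Finset.subset_union_left) hbud2
      have h3 := passVal_false_succ_ge_pass (G := H) q hD'
      omega

end Main

/-- If `C` is a minimum edge cut of a connected graph `G` (so that `|C| = κ'(G)`), then
`γ_g(G) ≤ γ_g(G \ C) + 2κ'(G)`. -/
theorem stmt5 {V : Type*} [Fintype V] (G : SimpleGraph V) (hG : G.Connected)
    (C : Set (Sym2 V)) (hC : IsMinimumEdgeCut G C) :
    gammaG G ∅ ≤ gammaG (G.deleteEdges C) ∅ + 2 * C.ncard := by
  classical
  set H := G.deleteEdges C with hH
  have hCfin : C.Finite := Set.toFinite C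
  set CF : Finset (Sym2 V) := hCfin.toFinset with hCF
  have hsub : ∀ v, closedNbhd H v ⊆ closedNbhd G v := by
    intro v u hu
    rw [mem_closedNbhd] at hu ⊢
    rcases hu with rfl | h
    · exact Or.inl rfl
    · exact Or.inr ((SimpleGraph.deleteEdges_adj).1 h).1
  have hcut : ∀ v u, u ∈ closedNbhd G v → u ∉ closedNbhd H v → s(v, u) ∈ CF := by
    intro v u h1 h2
    rw [mem_closedNbhd] at h1 h2
    push_neg at h2
    obtain ⟨hne, hnadj⟩ := h2
    rcases h1 with rfl | hadj
    · exact absurd rfl hne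
    · have hmem : s(v, u) ∈ C := by
        by_contra hc
        exact hnadj ((SimpleGraph.deleteEdges_adj).2 ⟨hadj, hc⟩)
      rw [hCF, Set.Finite.mem_toFinset]
      exact hmem
  have hbud : (CF.filter (fun e => ∃ x ∈ e, x ∉ (∅ : Finset V))).card ≤ CF.card :=
    Finset.card_le_card (Finset.filter_subset _ _)
  have h1 := imitation G H CF hsub hcut
    ((univ \ (∅ : Finset V)).card + CF.card) true CF.card ∅ ∅ le_rfl
    (Finset.Subset.refl _) hbud
  have h2 := passVal_le_gameVal H ((univ \ (∅ : Finset V)).card + CF.card) true CF.card ∅ le_rfl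
  have h3 : CF.card = C.ncard := (Set.ncard_eq_toFinset_card C hCfin).symm
  unfold gammaG
  omega
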